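/- For every real number α such that α − 4k ∈ (1,3) for some integer k, the matrices J₁(α) and b₂(α) do not commute: J₁(α)·b₂(α) ≠ b₂(α)·J₁(α). -/
import Mathlib


open Complex Matrix

/-- The normalized affine braid generator `J₁(α) = diag(e^{iπα/4}, e^{-iπα/4})`. -/
noncomputable def J1 (α : ℝ) : Matrix (Fin 2) (Fin 2) ℂ :=
  !![Complex.exp (Complex.I * (Real.pi * α / 4)), 0;
     0, Complex.exp (-(Complex.I * (Real.pi * α / 4)))]

/-- The normalized braid generator `b₂(α)` of the non-semisimple Ising anyon model on the
single-qubit space (one neglecton of parameter `α` and two Ising anyons). -/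
noncomputable def b2 (α : ℝ) : Matrix (Fin 2) (Fin 2) ℂ :=
  Complex.exp (-(Complex.I * (Real.pi / 4))) •
    !![(1 + Complex.I) / (1 - Complex.exp (Complex.I * (Real.pi * α / 2))),
       Complex.exp (-(Complex.I * (Real.pi / 4))) *
         ((((1 - Real.cot (Real.pi * α / 4) ^ 2) / 2 : ℝ) : ℂ) ^ ((1 : ℂ) / 2));
       Complex.exp (-(Complex.I * (Real.pi / 4))) *
         ((((1 - Real.cot (Real.pi * α / 4) ^ 2) / 2 : ℝ) : ℂ) ^ ((1 : ℂ) / 2)),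
       (1 + Complex.I) / (1 - Complex.exp (-(Complex.I * (Real.pi * α / 2))))]

/-- For every `α` congruent to a value in `(1,3)` modulo 4, the braid generators `J₁(α)`
and `b₂(α)` do not commute. -/
theorem J1_b2_not_commute (α : ℝ)
    (h : ∃ k : ℤ, 1 < α - 4 * k ∧ α - 4 * k < 3) :
    J1 α * b2 α ≠ b2 α * J1 α := by
  obtain ⟨k, h1, h3⟩ := h
  set β : ℝ := α - 4 * k with hβ
  have hθ : Real.pi * α / 4 = Real.pi * β / 4 + k * Real.pi := by
    rw [hβ]; ring
  have hsinβ : 0 < Real.sin (Real.pi * β / 4) := by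
    apply Real.sin_pos_of_pos_of_lt_pi
    · nlinarith [Real.pi_pos]
    · nlinarith [Real.pi_pos]
  have hsin : Real.sin (Real.pi * α / 4) ≠ 0 := by
    rw [hθ, Real.sin_add_int_mul_pi]
    exact mul_ne_zero (zpow_ne_zero k (by norm_num)) hsinβ.ne'
  -- cot² < 1
  have hcotval : Real.cot (Real.pi * α / 4)
      = Real.cos (Real.pi * β / 4) / Real.sin (Real.pi * β / 4) := by
    rw [Real.cot_eq_cos_div_sin, hθ, Real.sin_add_int_mul_pi, Real.cos_add_int_mul_pi]
    exact mul_div_mul_left _ _ (zpow_ne_zero k (by norm_num))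
  have hcos2 : Real.cos (2 * (Real.pi * β / 4)) < 0 := by
    apply Real.cos_neg_of_pi_div_two_lt_of_lt
    · nlinarith [Real.pi_pos]
    · nlinarith [Real.pi_pos]
  have hsq : Real.cos (Real.pi * β / 4) ^ 2 < Real.sin (Real.pi * β / 4) ^ 2 := by
    have h2 := Real.cos_two_mul (Real.pi * β / 4)
    have h3 := Real.sin_sq_add_cos_sq (Real.pi * β / 4)
    nlinarith
  have hcotlt : Real.cot (Real.pi * α / 4) ^ 2 < 1 := by
    rw [hcotval, div_pow, div_lt_one (by positivity)]
    exact hsq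
  have hzpos : (0 : ℝ) < (1 - Real.cot (Real.pi * α / 4) ^ 2) / 2 := by linarith
  intro heq
  have key := congrFun (congrFun heq 0) 1
  simp [J1, b2, Matrix.mul_apply, Fin.sum_univ_two, Matrix.smul_apply] at key
  -- key : cexp (I * θ) * c = c * cexp (-(I * θ))
  set w : ℂ := ((1 - Complex.cot ((Real.pi : ℂ) * (α : ℂ) / 4) ^ 2) / 2) ^ (2⁻¹ : ℂ) with hw
  have hwz : ((1 - Complex.cot ((Real.pi : ℂ) * (α : ℂ) / 4) ^ 2) / 2) ≠ 0 := by
    have hc : ((Real.pi : ℂ) * (α : ℂ) / 4) = ((Real.pi * α / 4 : ℝ) : ℂ) := by push_cast; ring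
    rw [hc, ← Complex.ofReal_cot]
    have : ((1 - (Real.cot (Real.pi * α / 4) : ℂ) ^ 2) / 2)
        = (((1 - Real.cot (Real.pi * α / 4) ^ 2) / 2 : ℝ) : ℂ) := by
      push_cast; ring
    rw [this]
    exact_mod_cast hzpos.ne'
  have hwne : w ≠ 0 := by
    rw [hw, Complex.cpow_def_of_ne_zero hwz]
    exact Complex.exp_ne_zero _
  have hcne : Complex.exp (-(Complex.I * (Real.pi / 4))) *
      (Complex.exp (-(Complex.I * (Real.pi / 4))) * w) ≠ 0 :=
    mul_ne_zero (Complex.exp_ne_zero _) (mul_ne_zero (Complex.exp_ne_zero _) hwne)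
  have hexp : Complex.exp (Complex.I * (Real.pi * α / 4))
      = Complex.exp (-(Complex.I * (Real.pi * α / 4))) := by
    refine mul_right_cancel₀ hcne ?_
    rw [key]; ring
  apply hsin
  have harg1 : Complex.I * ((Real.pi : ℂ) * (α : ℂ) / 4)
      = ((Real.pi * α / 4 : ℝ) : ℂ) * Complex.I := by push_cast; ring
  rw [harg1] at hexp
  rw [show -(((Real.pi * α / 4 : ℝ) : ℂ) * Complex.I)
      = ((-(Real.pi * α / 4) : ℝ) : ℂ) * Complex.I from by push_cast; ring] at hexp
  have him := congrArg Complex.im hexp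
  rw [Complex.exp_ofReal_mul_I_im, Complex.exp_ofReal_mul_I_im, Real.sin_neg] at him
  linarith
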